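/- arXiv:0910.4601 — 4 statements merged into one kernel-verified Lean document; each statement's English description precedes it below -/
import Mathlib

section
/- Let p > q > 0 be coprime integers with continued fraction expansions p/q = [a_1,...,a_l] and p/(p-q) = [b_1,...,b_k], where all a_i, b_j ≥ 2 and [c_1,...,c_m] denotes the continued fraction c_1 - 1/(c_2 - 1/(... - 1/c_m)). Then the two strings (a_1,...,a_l) and (b_1,...,b_k) are related as follows: starting from the pair of strings ((2),(2)), each can be obtained from the other by a finite sequence of operations of type (1): ((a_1,...,a_n),(b_1,...,b_m)) → ((a_1,...,a_n+1),(b_1,...,b_m,2)), and type (2): ((a_1,...,a_n),(b_1,...,b_m)) → ((a_1,...,a_n,2),(b_1,...,b_m+1)). -/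
/-!
Write `num l / den l` for the fraction `[a₁,…,aₖ]` read off the first column of the matrix
product `∏ !![aᵢ, -1; 1, 0]`. Reversing the string transposes this product up to signs, so the
reversed string has the same numerator `p` and a denominator `q*` with `q q* ≡ 1 (mod p)`.
Consequently, if `A` and `B` expand `p/q` and `p/(p-q)`, then their reverses expand `p/q*` and
`p/(p-q*)`. On reversed strings the point rule acts on the first entries, and it can be undone
by a Euclidean-type descent: if `2q < p`, then `A = (a, …)` with `a ≥ 3` and `B = (2, …)`, and
`(a - 1, …)` and `B` without its head expand `(p-q)/q` and `(p-q)/(p-2q)`; the case `2q > p` is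
symmetric, and `2q = p` forces `p = 2`, i.e. the pair `((2),(2))`.
-/

/-- Negative continued fraction `[a₁,...,aₖ] = a₁ - 1/(a₂ - 1/(⋯ - 1/aₖ))`.
(Since `(0 : ℚ)⁻¹ = 0`, the value on a one-element list `[a]` is `a`.) -/
def negCF : List ℤ → ℚ
  | [] => 0
  | a :: l => (a : ℚ) - (negCF l)⁻¹

/-- Increase the last entry of a list of integers by `1`. -/
def bumpLast (l : List ℤ) : List ℤ := l.dropLast ++ [l.getLast! + 1]

/-- Riemenschneider's point rule relation on pairs of strings of integers: generated
from the pair `((2),(2))` by the operations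
`(1) : (a₁,...,aₙ),(b₁,...,bₘ) ↦ (a₁,...,aₙ+1),(b₁,...,bₘ,2)` and
`(2) : (a₁,...,aₙ),(b₁,...,bₘ) ↦ (a₁,...,aₙ,2),(b₁,...,bₘ+1)`. -/
inductive RiemRel : List ℤ → List ℤ → Prop
  | base : RiemRel [2] [2]
  | op1 {a b : List ℤ} : RiemRel a b → RiemRel (bumpLast a) (b ++ [2])
  | op2 {a b : List ℤ} : RiemRel a b → RiemRel (a ++ [2]) (bumpLast b)

lemma bumpLast_concat (l : List ℤ) (x : ℤ) : bumpLast (l ++ [x]) = l ++ [x + 1] := by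
  simp [bumpLast]

namespace RiemRel

lemma symm {a b : List ℤ} (h : RiemRel a b) : RiemRel b a := by
  induction h with
  | base => exact base
  | op1 _ ih => exact ih.op2
  | op2 _ ih => exact ih.op1

lemma reverse_succ_cons {x : ℤ} {a b : List ℤ} (h : RiemRel (x :: a).reverse b.reverse) :
    RiemRel ((x + 1) :: a).reverse (2 :: b).reverse := by
  simpa [bumpLast_concat] using h.op1

end RiemRel

namespace NegCF

open Matrix

/-- The matrix of the Möbius map `x ↦ a - 1/x`. -/
def step (a : ℤ) : Matrix (Fin 2) (Fin 2) ℤ := !![a, -1; 1, 0]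

def mat (l : List ℤ) : Matrix (Fin 2) (Fin 2) ℤ := (l.map step).prod

def num (l : List ℤ) : ℤ := mat l 0 0

def den (l : List ℤ) : ℤ := mat l 1 0

@[simp] lemma mat_nil : mat [] = 1 := rfl

@[simp] lemma mat_cons (a : ℤ) (l : List ℤ) : mat (a :: l) = step a * mat l := rfl

lemma mat_append (l₁ l₂ : List ℤ) : mat (l₁ ++ l₂) = mat l₁ * mat l₂ := by
  simp [mat]

@[simp] lemma num_nil : num [] = 1 := rfl

@[simp] lemma den_nil : den [] = 0 := rfl

@[simp] lemma num_cons (a : ℤ) (l : List ℤ) : num (a :: l) = a * num l - den l := by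
  simp [num, den, step, mul_apply, Fin.sum_univ_two, sub_eq_add_neg]

@[simp] lemma den_cons (a : ℤ) (l : List ℤ) : den (a :: l) = num l := by
  simp [num, den, step, mul_apply, Fin.sum_univ_two]

lemma det_mat (l : List ℤ) : (mat l).det = 1 := by
  induction l with
  | nil => simp
  | cons a l ih => rw [mat_cons, det_mul, ih, step, det_fin_two_of]; ring

lemma mat_reverse (l : List ℤ) :
    mat l.reverse = !![mat l 0 0, -mat l 1 0; -mat l 0 1, mat l 1 1] := by
  induction l with
  | nil => exact (one_fin_two).trans (by simp)
  | cons a l ih =>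
    rw [List.reverse_cons, mat_append, ih]
    ext i j
    fin_cases i <;> fin_cases j <;> simp [step, mul_apply, Fin.sum_univ_two] <;> ring

lemma num_reverse (l : List ℤ) : num l.reverse = num l := by
  simp [num, mat_reverse]

lemma den_reverse (l : List ℤ) : den l.reverse = -mat l 0 1 := by
  simp [den, mat_reverse]

lemma num_mul_sub_den_mul (l : List ℤ) : num l * mat l 1 1 - mat l 0 1 * den l = 1 := by
  rw [num, den, ← det_fin_two, det_mat]

lemma isCoprime_num_den (l : List ℤ) : IsCoprime (num l) (den l) :=
  ⟨mat l 1 1, -mat l 0 1, by linear_combination num_mul_sub_den_mul l⟩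

lemma den_reverse_mul_den (l : List ℤ) : den l.reverse * den l ≡ 1 [ZMOD num l] :=
  Int.modEq_iff_dvd.2 ⟨mat l 1 1, by rw [den_reverse]; linear_combination -num_mul_sub_den_mul l⟩

variable {l : List ℤ}

lemma den_mem_Ico (h : ∀ x ∈ l, 2 ≤ x) : den l ∈ Set.Ico 0 (num l) := by
  induction l with
  | nil => simp
  | cons a l ih =>
    obtain ⟨hd, hn⟩ := ih fun x hx => h x (List.mem_cons_of_mem a hx)
    have ha : 2 ≤ a := h a List.mem_cons_self
    simp only [Set.mem_Ico, num_cons, den_cons]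
    constructor <;> nlinarith

lemma num_pos (h : ∀ x ∈ l, 2 ≤ x) : 0 < num l :=
  (den_mem_Ico h).1.trans_lt (den_mem_Ico h).2

lemma den_pos (h : ∀ x ∈ l, 2 ≤ x) (hl : l ≠ []) : 0 < den l := by
  obtain ⟨a, l, rfl⟩ := List.exists_cons_of_ne_nil hl
  exact den_cons a l ▸ num_pos fun x hx => h x (List.mem_cons_of_mem a hx)

lemma num_eq_one_iff (h : ∀ x ∈ l, 2 ≤ x) : num l = 1 ↔ l = [] := by
  refine ⟨fun h1 => ?_, fun h => h ▸ num_nil⟩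
  cases l with
  | nil => rfl
  | cons a l =>
    obtain ⟨hd, hn⟩ := den_mem_Ico fun x hx => h x (List.mem_cons_of_mem a hx)
    have ha : 2 ≤ a := h a List.mem_cons_self
    rw [num_cons] at h1
    nlinarith

lemma negCF_eq_num_div_den (h : ∀ x ∈ l, 2 ≤ x) : negCF l = num l / den l := by
  induction l with
  | nil => simp [negCF]
  | cons a l ih =>
    have hn : (num l : ℚ) ≠ 0 := by
      exact_mod_cast (num_pos fun x hx => h x (List.mem_cons_of_mem a hx)).ne'
    rw [negCF, ih fun x hx => h x (List.mem_cons_of_mem a hx), inv_div, num_cons, den_cons]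
    push_cast
    field_simp

lemma num_den_eq_of_negCF_eq (h : ∀ x ∈ l, 2 ≤ x) {p q : ℤ} (hp : 0 < p) (hq : 0 < q)
    (hpq : IsCoprime p q) (hcf : negCF l = p / q) : num l = p ∧ den l = q := by
  rw [negCF_eq_num_div_den h] at hcf
  have hden : (den l : ℚ) ≠ 0 := by
    intro h0
    simp [h0, eq_comm, hp.ne', hq.ne'] at hcf
  have hcross : num l * q = p * den l := by
    rw [div_eq_div_iff hden (by exact_mod_cast hq.ne')] at hcf
    exact_mod_cast hcf
  have hnum : num l = p :=
    Int.dvd_antisymm (num_pos h).le hp.le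
      ((isCoprime_num_den l).dvd_of_dvd_mul_right ⟨q, by rw [hcross, mul_comm]⟩)
      (hpq.dvd_of_dvd_mul_right ⟨den l, hcross⟩)
  refine ⟨hnum, ?_⟩
  rw [hnum] at hcross
  exact (mul_left_cancel₀ hp.ne' hcross).symm

lemma eq_singleton_two (h : ∀ x ∈ l, 2 ≤ x) (heq : num l = 2 * den l) : l = [2] := by
  have hd : den l = 1 := by
    have hu : IsUnit (den l) := isCoprime_self.1 (heq ▸ isCoprime_num_den l).of_mul_left_right
    have := (den_mem_Ico h).1
    rcases Int.isUnit_iff.1 hu with h1 | h1 <;> omega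
  obtain ⟨a, l, rfl⟩ := List.exists_cons_of_ne_nil (show l ≠ [] by rintro rfl; simp at heq)
  rw [den_cons, num_eq_one_iff fun x hx => h x (List.mem_cons_of_mem a hx)] at hd
  subst hd
  simp only [num_cons, num_nil, den_nil, den_cons] at heq
  rw [show a = 2 by linarith]

/-- `A` and `B` expand `p/q` and `p/(p-q)` for some coprime `p > q > 0`. -/
structure IsDual (A B : List ℤ) : Prop where
  two_le_left : ∀ x ∈ A, 2 ≤ x
  two_le_right : ∀ x ∈ B, 2 ≤ x
  num_eq : num A = num B
  den_add_den : den A + den B = num A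

namespace IsDual

variable {A B : List ℤ}

lemma symm (h : IsDual A B) : IsDual B A :=
  ⟨h.two_le_right, h.two_le_left, h.num_eq.symm, by rw [add_comm, h.den_add_den, h.num_eq]⟩

lemma ne_nil_left (h : IsDual A B) : A ≠ [] := by
  rintro rfl
  have := h.den_add_den
  have := h.num_eq
  have := (den_mem_Ico h.two_le_right).2
  simp_all

lemma ne_nil_right (h : IsDual A B) : B ≠ [] :=
  h.symm.ne_nil_left

lemma den_reverse_add_den_reverse (h : IsDual A B) : den A.reverse + den B.reverse = num A := by
  have hA : ∀ x ∈ A.reverse, 2 ≤ x := fun x hx => h.two_le_left x (List.mem_reverse.1 hx)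
  have hB : ∀ x ∈ B.reverse, 2 ≤ x := fun x hx => h.two_le_right x (List.mem_reverse.1 hx)
  obtain ⟨k, hk⟩ := (den_reverse_mul_den A).dvd
  obtain ⟨k', hk'⟩ := (den_reverse_mul_den B).dvd
  rw [← h.num_eq] at hk'
  have hdvd : num A ∣ den A.reverse + den B.reverse :=
    (isCoprime_num_den A).dvd_of_dvd_mul_right ⟨den B.reverse + k' - k,
      by linear_combination hk' - hk + den B.reverse * h.den_add_den⟩
  have hrA : den A.reverse < num A := num_reverse A ▸ (den_mem_Ico hA).2
  have hrB : den B.reverse < num A := h.num_eq ▸ num_reverse B ▸ (den_mem_Ico hB).2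
  have hrA0 := den_pos hA (List.reverse_ne_nil_iff.2 h.ne_nil_left)
  have hrB0 := den_pos hB (List.reverse_ne_nil_iff.2 h.ne_nil_right)
  have := Int.eq_zero_of_abs_lt_dvd (dvd_sub_self_right.2 hdvd)
    (abs_sub_lt_iff.2 ⟨by linarith, by linarith⟩)
  linarith

lemma reverse (h : IsDual A B) : IsDual A.reverse B.reverse where
  two_le_left x hx := h.two_le_left x (List.mem_reverse.1 hx)
  two_le_right x hx := h.two_le_right x (List.mem_reverse.1 hx)
  num_eq := by rw [num_reverse, num_reverse, h.num_eq]
  den_add_den := by rw [num_reverse, h.den_reverse_add_den_reverse]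

lemma eq_singleton_two (h : IsDual A B) (heq : num A = 2 * den A) : A = [2] ∧ B = [2] := by
  refine ⟨NegCF.eq_singleton_two h.two_le_left heq, NegCF.eq_singleton_two h.two_le_right ?_⟩
  linarith [h.num_eq, h.den_add_den]

lemma eq_two_and_isDual_tail {a b : ℤ} (h : IsDual (a :: A) (b :: B))
    (hlt : 2 * den (a :: A) < num (a :: A)) : b = 2 ∧ IsDual ((a - 1) :: A) B := by
  have hA : ∀ x ∈ A, 2 ≤ x := fun x hx => h.two_le_left x (List.mem_cons_of_mem a hx)
  have hB : ∀ x ∈ B, 2 ≤ x := fun x hx => h.two_le_right x (List.mem_cons_of_mem b hx)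
  obtain ⟨hdA, hdA'⟩ := den_mem_Ico hA
  obtain ⟨hdB, hdB'⟩ := den_mem_Ico hB
  have ha : 2 ≤ a := h.two_le_left a List.mem_cons_self
  have hb : 2 ≤ b := h.two_le_right b List.mem_cons_self
  have hnum := h.num_eq
  have hden := h.den_add_den
  simp only [num_cons, den_cons] at hnum hden hlt
  have hb2 : b = 2 := by
    have : b < 3 := by nlinarith
    omega
  have ha3 : 3 ≤ a := by
    by_contra! ha2
    nlinarith
  subst hb2
  refine ⟨rfl, ⟨?_, hB, ?_, ?_⟩⟩
  · intro x hx
    rcases List.mem_cons.1 hx with rfl | hx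
    · omega
    · exact hA x hx
  · simp only [num_cons]; linarith
  · simp only [num_cons, den_cons]; linarith

theorem riemRel_reverse : ∀ {A B : List ℤ}, IsDual A B → RiemRel A.reverse B.reverse
  | [], _, h => absurd rfl h.ne_nil_left
  | _, [], h => absurd rfl h.ne_nil_right
  | a :: A, b :: B, h => by
    rcases lt_trichotomy (2 * den (a :: A)) (num (a :: A)) with hlt | heq | hgt
    · obtain ⟨rfl, h'⟩ := h.eq_two_and_isDual_tail hlt
      simpa using (riemRel_reverse h').reverse_succ_cons
    · obtain ⟨hA, hB⟩ := h.eq_singleton_two heq.symm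
      rw [hA, hB]
      exact RiemRel.base
    · have hlt' : 2 * den (b :: B) < num (b :: B) := by
        linarith [h.num_eq, h.den_add_den]
      obtain ⟨rfl, h'⟩ := h.symm.eq_two_and_isDual_tail hlt'
      simpa using (riemRel_reverse h').reverse_succ_cons.symm
termination_by A B => A.length + B.length

lemma riemRel {A B : List ℤ} (h : IsDual A B) : RiemRel A B := by
  simpa using h.reverse.riemRel_reverse

end IsDual

end NegCF

theorem riemRel_of_negCF_general (p q : ℤ) (h0 : 0 < q) (hqp : q < p) (hcop : Int.gcd p q = 1)
    (A B : List ℤ)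
    (hA2 : ∀ x ∈ A, 2 ≤ x) (hB2 : ∀ x ∈ B, 2 ≤ x)
    (hcfA : negCF A = (p : ℚ) / (q : ℚ))
    (hcfB : negCF B = (p : ℚ) / ((p : ℚ) - (q : ℚ))) :
    RiemRel A B := by
  have hpq : IsCoprime p q := Int.isCoprime_iff_gcd_eq_one.2 hcop
  have hpq' : IsCoprime p (p - q) := by
    simpa [neg_add_eq_sub] using hpq.neg_right.add_mul_left_right 1
  obtain ⟨hnA, hdA⟩ := NegCF.num_den_eq_of_negCF_eq hA2 (by omega) h0 hpq hcfA
  obtain ⟨hnB, hdB⟩ :=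
    NegCF.num_den_eq_of_negCF_eq hB2 (by omega) (by omega) hpq' (by rw [hcfB]; push_cast; rfl)
  exact NegCF.IsDual.riemRel ⟨hA2, hB2, by rw [hnA, hnB], by rw [hdA, hdB, hnA]; ring⟩

/-- If `p > q > 0` are coprime and `[a₁,...,a_l] = p/q`,
`[b₁,...,b_k] = p/(p-q)` with all entries `≥ 2`, then the two strings are related by
Riemenschneider's point rule. -/
theorem riemRel_of_negCF (p q : ℤ) (h0 : 0 < q) (hqp : q < p) (hcop : Int.gcd p q = 1)
    (A B : List ℤ) (hA : A ≠ []) (hB : B ≠ [])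
    (hA2 : ∀ x ∈ A, 2 ≤ x) (hB2 : ∀ x ∈ B, 2 ≤ x)
    (hcfA : negCF A = (p : ℚ) / (q : ℚ))
    (hcfB : negCF B = (p : ℚ) / ((p : ℚ) - (q : ℚ))) :
    RiemRel A B :=
  riemRel_of_negCF_general p q h0 hqp hcop A B hA2 hB2 hcfA hcfB
end

section
/- If the two strings of integers (a_1,...,a_n) and (b_1,...,b_m), with all entries ≥ 2, are obtained from the pair ((2),(2)) by a finite sequence of the operations (1): ((a_1,...,a_n),(b_1,...,b_m)) → ((a_1,...,a_n+1),(b_1,...,b_m,2)) and (2): ((a_1,...,a_n),(b_1,...,b_m)) → ((a_1,...,a_n,2),(b_1,...,b_m+1)), and if [a_1,...,a_n] = p/q in lowest terms with p > q > 0, then [b_1,...,b_m] = p/(p-q). -/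
/-!
Write `M(a) = [[a, -1], [1, 0]]`, so that `[a₁,...,aₖ] = p/q` where `(p, q)` is the first
column of `M(a₁)⋯M(aₖ)`; entries `≥ 2` force `0 ≤ q < p`, so no division is degenerate.
Appending `2` multiplies this product on the right by `M(2)`, and increasing the last entry
multiplies it on the right by `U = [[1, 0], [-1, 1]]`. With `J = [[1, 0], [1, -1]]` and
`K = [[1, -1], [0, -1]]` one has `U K = K M(2)` and `K U = M(2) K`, so both operations preserve
the relation `M(B) = J M(A) K`, which holds for `((2),(2))`. The first column of `J M(A) K` is
`(p, p - q)`, hence `[B] = p/(p - q)`.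
-/

def negCFMatrix (l : List ℤ) : Matrix (Fin 2) (Fin 2) ℤ :=
  (l.map fun a => !![a, -1; 1, 0]).prod

lemma negCFMatrix_cons_zero_zero (a : ℤ) (l : List ℤ) :
    negCFMatrix (a :: l) 0 0 = a * negCFMatrix l 0 0 - negCFMatrix l 1 0 := by
  simp [negCFMatrix, Matrix.mul_apply, Fin.sum_univ_two, sub_eq_add_neg]

lemma negCFMatrix_cons_one_zero (a : ℤ) (l : List ℤ) :
    negCFMatrix (a :: l) 1 0 = negCFMatrix l 0 0 := by
  simp [negCFMatrix, Matrix.mul_apply, Fin.sum_univ_two]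

lemma negCFMatrix_append_singleton (l : List ℤ) (c : ℤ) :
    negCFMatrix (l ++ [c]) = negCFMatrix l * !![c, -1; 1, 0] := by
  simp [negCFMatrix]

lemma bumpLast_append_singleton (l : List ℤ) (c : ℤ) : bumpLast (l ++ [c]) = l ++ [c + 1] := by
  simp [bumpLast]

lemma bumpLast_ne_nil (l : List ℤ) : bumpLast l ≠ [] := by
  simp [bumpLast]

lemma negCFMatrix_bumpLast {l : List ℤ} (hl : l ≠ []) :
    negCFMatrix (bumpLast l) = negCFMatrix l * !![1, 0; -1, 1] := by
  obtain ⟨l, c, rfl⟩ := l.eq_nil_or_concat'.resolve_left hl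
  rw [bumpLast_append_singleton, negCFMatrix_append_singleton, negCFMatrix_append_singleton,
    Matrix.mul_assoc]
  congr 1
  ext i j
  fin_cases i <;> fin_cases j <;> simp

lemma two_le_of_mem_bumpLast {l : List ℤ} (hl : l ≠ []) (h : ∀ x ∈ l, 2 ≤ x) :
    ∀ x ∈ bumpLast l, 2 ≤ x := by
  obtain ⟨l, c, rfl⟩ := l.eq_nil_or_concat'.resolve_left hl
  simp only [bumpLast_append_singleton, List.mem_append, List.mem_singleton] at h ⊢
  rintro x (hx | rfl)
  · exact h x (.inl hx)
  · linarith [h c (.inr rfl)]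

lemma negCF_eq_div {l : List ℤ} (hl : ∀ x ∈ l, 2 ≤ x) :
    0 ≤ negCFMatrix l 1 0 ∧ negCFMatrix l 1 0 < negCFMatrix l 0 0 ∧
      negCF l = negCFMatrix l 0 0 / negCFMatrix l 1 0 := by
  induction l with
  | nil => simp [negCF, negCFMatrix]
  | cons a l ih =>
    obtain ⟨hq, hqp, hcf⟩ := ih fun x hx => hl x (.tail a hx)
    have ha : 2 ≤ a := hl a (.head l)
    have hp : (negCFMatrix l 0 0 : ℚ) ≠ 0 := by exact_mod_cast (hq.trans_lt hqp).ne'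
    rw [negCFMatrix_cons_zero_zero, negCFMatrix_cons_one_zero]
    refine ⟨by linarith, by nlinarith, ?_⟩
    rw [negCF, hcf, inv_div]
    field_simp
    push_cast
    ring

lemma negCFMatrix_one_zero_pos {l : List ℤ} (hne : l ≠ []) (hl : ∀ x ∈ l, 2 ≤ x) :
    0 < negCFMatrix l 1 0 := by
  obtain ⟨a, l, rfl⟩ := List.exists_cons_of_ne_nil hne
  obtain ⟨hq, hqp, -⟩ := negCF_eq_div fun x hx => hl x (.tail a hx)
  rw [negCFMatrix_cons_one_zero]
  exact hq.trans_lt hqp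

namespace RiemRel

variable {A B : List ℤ}

lemma ne_nil (h : RiemRel A B) : A ≠ [] ∧ B ≠ [] := by
  cases h <;> simp [bumpLast_ne_nil]

lemma two_le (h : RiemRel A B) : (∀ x ∈ A, 2 ≤ x) ∧ ∀ x ∈ B, 2 ≤ x := by
  induction h with
  | base => simp
  | op1 h ih =>
    exact ⟨two_le_of_mem_bumpLast h.ne_nil.1 ih.1, by simpa [or_imp, forall_and] using ih.2⟩
  | op2 h ih =>
    exact ⟨by simpa [or_imp, forall_and] using ih.1, two_le_of_mem_bumpLast h.ne_nil.2 ih.2⟩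

lemma negCFMatrix_eq (h : RiemRel A B) :
    negCFMatrix B = !![1, 0; 1, -1] * negCFMatrix A * !![1, -1; 0, -1] := by
  induction h with
  | base => decide
  | op1 h ih =>
    have hUK : !![1, 0; -1, 1] * !![1, -1; 0, -1] = !![1, -1; 0, -1] * !![(2 : ℤ), -1; 1, 0] := by
      decide
    rw [negCFMatrix_append_singleton, negCFMatrix_bumpLast h.ne_nil.1, ih]
    simp only [Matrix.mul_assoc, hUK]
  | op2 h ih =>
    have hKU : !![1, -1; 0, -1] * !![1, 0; -1, 1] = !![(2 : ℤ), -1; 1, 0] * !![1, -1; 0, -1] := by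
      decide
    rw [negCFMatrix_append_singleton, negCFMatrix_bumpLast h.ne_nil.2, ih]
    simp only [Matrix.mul_assoc, hKU]

/-- Riemenschneider duality, in the form `1/[A] + 1/[B] = 1`. -/
lemma negCF_eq (h : RiemRel A B) : negCF B = negCF A / (negCF A - 1) := by
  obtain ⟨hA, hB⟩ := h.two_le
  obtain ⟨-, -, hcfA⟩ := negCF_eq_div hA
  obtain ⟨-, -, hcfB⟩ := negCF_eq_div hB
  have hq : (negCFMatrix A 1 0 : ℚ) ≠ 0 := by
    exact_mod_cast (negCFMatrix_one_zero_pos h.ne_nil.1 hA).ne'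
  rw [hcfB, hcfA, h.negCFMatrix_eq, div_sub_one hq, div_div_div_cancel_right₀ hq]
  simp [Matrix.mul_apply, Fin.sum_univ_two, Matrix.vecMul, dotProduct, sub_eq_add_neg]

end RiemRel

theorem negCF_of_riemRel_general (A B : List ℤ) (h : RiemRel A B) (p q : ℤ)
    (h0 : 0 < q) (hcfA : negCF A = (p : ℚ) / (q : ℚ)) :
    negCF B = (p : ℚ) / ((p : ℚ) - (q : ℚ)) := by
  have hq : (q : ℚ) ≠ 0 := by exact_mod_cast h0.ne'
  rw [h.negCF_eq, hcfA, div_sub_one hq, div_div_div_cancel_right₀ hq]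

/-- If `(A, B)` is obtained from `((2),(2))` by the operations of
Riemenschneider's point rule, and `[A] = p/q` in lowest terms with `p > q > 0`, then
`[B] = p/(p-q)`. -/
theorem negCF_of_riemRel (A B : List ℤ) (h : RiemRel A B) (p q : ℤ)
    (h0 : 0 < q) (hqp : q < p) (hcop : Int.gcd p q = 1)
    (hcfA : negCF A = (p : ℚ) / (q : ℚ)) :
    negCF B = (p : ℚ) / ((p : ℚ) - (q : ℚ)) :=
  negCF_of_riemRel_general A B h p q h0 hcfA
end

section
/- There is no subset P = {v_0, v_1, v_2, v_3} ⊆ Z^4 such that: each v_i·v_i ≤ -2 for i=1,2,3 and v_0·v_0 ≤ -3 (with respect to the product v·w = -⟨v,w⟩), v_0·v_i = 1 for i = 1,2,3, v_i·v_j = 0 for distinct i,j ∈ {1,2,3}, and I(P) = Σ_i(-v_i·v_i - 3) < -1. -/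
/-!
The Gram matrix `(-vᵢ·vⱼ) = (⟨vᵢ,vⱼ⟩)` equals `M Mᵀ` for the integer matrix `M` with rows `vᵢ`,
so its determinant `det M ^ 2` is a perfect square. For a trivalent vertex with three
legs this determinant is `s₀s₁s₂s₃ - s₂s₃ - s₁s₃ - s₁s₂`, where `sᵢ = -vᵢ·vᵢ`, and
`I(P) < -1` forces `(s₀, s₁, s₂, s₃)` to be `(3,2,2,2)` or to exceed it by one in a single
entry, where the determinant is `12` or `20`: neither is a square.
-/

/-- Vectors in the lattice `ℤⁿ`. -/
abbrev Vec (n : ℕ) := Fin n → ℤ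

/-- The intersection product on `ℤⁿ`: `v · w = -⟨v,w⟩`, where `⟨·,·⟩` is the standard
inner product, so that `eᵢ · eⱼ = -δᵢⱼ` (the negative definite diagonal lattice). -/
def Idot {n : ℕ} (v w : Vec n) : ℤ := -∑ i, v i * w i

/-- The standard basis vector `eᵢ` of `ℤⁿ`. -/
def bvec {n : ℕ} (i : Fin n) : Vec n := Pi.single i 1

/-- The quantity `I(P) = ∑_{v ∈ P} (-v·v - 3)`. -/
def Iinv {n : ℕ} (P : Finset (Vec n)) : ℤ := ∑ v ∈ P, (-Idot v v - 3)

/-- A sign `ε ∈ {1, -1}`. -/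
def IsSign (ε : ℤ) : Prop := ε = 1 ∨ ε = -1

lemma Idot_comm {n : ℕ} (v w : Vec n) : Idot v w = Idot w v := by
  simp only [Idot, mul_comm]

lemma isSquare_det_neg_Idot_gram {n : ℕ} (v : Fin n → Vec n) :
    IsSquare (Matrix.of fun i j => -Idot (v i) (v j)).det := by
  refine ⟨(Matrix.of v).det, ?_⟩
  nth_rw 2 [← Matrix.det_transpose (Matrix.of v)]
  rw [← Matrix.det_mul]
  congr 1
  ext i j
  simp [Matrix.mul_apply, Idot]

lemma det_star_fin_four {R : Type*} [CommRing R] (a b c e x y z : R) :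
    (!![a, x, y, z; x, b, 0, 0; y, 0, c, 0; z, 0, 0, e]).det
      = a * b * c * e - x ^ 2 * c * e - y ^ 2 * b * e - z ^ 2 * b * c := by
  rw [Matrix.det_succ_row_zero]
  simp [Fin.sum_univ_succ, Matrix.det_fin_three, Fin.succAbove]
  ring

lemma not_isSquare_star_det_of_sum_le_ten {a b c e : ℤ} (ha : 3 ≤ a) (hb : 2 ≤ b) (hc : 2 ≤ c) (he : 2 ≤ e)
    (hsum : a + b + c + e ≤ 10) :
    ¬ IsSquare (a * b * c * e - c * e - b * e - b * c) := by
  have hval : a * b * c * e - c * e - b * e - b * c = 12 ∨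
      a * b * c * e - c * e - b * e - b * c = 20 := by
    have : a ≤ 4 := by omega
    have : b ≤ 3 := by omega
    have : c ≤ 3 := by omega
    have : e ≤ 3 := by omega
    interval_cases a <;> interval_cases b <;> interval_cases c <;> interval_cases e <;> omega
  rcases hval with h | h <;> rw [h] <;> decide +kernel

/-- There is no standard subset `{v₀, v₁, v₂, v₃} ⊆ ℤ⁴` with trivalent
vertex `v₀` (square `≤ -3`) and three legs of length one (squares `≤ -2`) such that
`I(P) < -1`. -/
theorem no_standard_subset_Z4 :
    ¬ ∃ v0 v1 v2 v3 : Vec 4,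
      Idot v0 v0 ≤ -3 ∧ Idot v1 v1 ≤ -2 ∧ Idot v2 v2 ≤ -2 ∧ Idot v3 v3 ≤ -2 ∧
      Idot v0 v1 = 1 ∧ Idot v0 v2 = 1 ∧ Idot v0 v3 = 1 ∧
      Idot v1 v2 = 0 ∧ Idot v1 v3 = 0 ∧ Idot v2 v3 = 0 ∧
      (-Idot v0 v0 - 3) + (-Idot v1 v1 - 3) + (-Idot v2 v2 - 3) + (-Idot v3 v3 - 3) < -1 := by
  rintro ⟨v0, v1, v2, v3, h00, h11, h22, h33, h01, h02, h03, h12, h13, h23, hI⟩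
  have hgram : (Matrix.of fun i j => -Idot (![v0, v1, v2, v3] i) (![v0, v1, v2, v3] j)) =
      !![-Idot v0 v0, -1, -1, -1; -1, -Idot v1 v1, 0, 0;
        -1, 0, -Idot v2 v2, 0; -1, 0, 0, -Idot v3 v3] := by
    ext i j
    fin_cases i <;> fin_cases j <;> simp [*, Idot_comm v1 v0, Idot_comm v2 v0, Idot_comm v3 v0,
      Idot_comm v2 v1, Idot_comm v3 v1, Idot_comm v3 v2]
  have hsq := isSquare_det_neg_Idot_gram ![v0, v1, v2, v3]
  rw [hgram, det_star_fin_four] at hsq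
  simp only [neg_one_sq, one_mul] at hsq
  exact not_isSquare_star_det_of_sum_le_ten (by omega) (by omega) (by omega) (by omega) (by omega) hsq
end

section
/- For complementary legs L_2, L_3 ⊆ Z^n (obtained from the pair {-e_k + e_h, -e_k - e_h} by final (-2)-vector expansions), one has |V_{L_2 ∪ L_3}| = n_2 + n_3 and I(L_2 ∪ L_3) = -2, where n_i = |L_i|, V_S is the set of coordinate indices used by S, and I(S) = Σ_{v∈S}(-v·v - 3). -/
/-- Complementary legs: pairs of chains of vectors obtained from the pair
`([-e_k + e_h], [-e_k - e_h])` by final `(-2)`-vector expansions: one leg has its final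
vector bumped by `± e_m` for a fresh coordinate `m`, and a new final `(-2)`-vector
`±e_j ± e_m` is appended to the other leg, adjacent to its old final vector and
orthogonal to everything else. -/
inductive CompLegs {n : ℕ} (k h : Fin n) : List (Vec n) → List (Vec n) → Prop
  | base (hkh : k ≠ h) : CompLegs k h [-bvec k + bvec h] [-bvec k - bvec h]
  | bumpLeft (L M : List (Vec n)) (m j : Fin n) (ε δ γ : ℤ) (hLM : CompLegs k h L M)
      (hm : ∀ v ∈ L ++ M, v m = 0) (hmk : m ≠ k) (hjk : j ≠ k)
      (hε : IsSign ε) (hδ : IsSign δ) (hγ : IsSign γ)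
      (hadj : Idot (δ • bvec j + γ • bvec m) M.getLast! = 1)
      (horthL : ∀ v ∈ L.dropLast, Idot (δ • bvec j + γ • bvec m) v = 0)
      (horthlast : Idot (δ • bvec j + γ • bvec m) (L.getLast! + ε • bvec m) = 0)
      (horthM : ∀ v ∈ M.dropLast, Idot (δ • bvec j + γ • bvec m) v = 0) :
      CompLegs k h (L.dropLast ++ [L.getLast! + ε • bvec m]) (M ++ [δ • bvec j + γ • bvec m])
  | bumpRight (L M : List (Vec n)) (m j : Fin n) (ε δ γ : ℤ) (hLM : CompLegs k h L M)
      (hm : ∀ v ∈ L ++ M, v m = 0) (hmk : m ≠ k) (hjk : j ≠ k)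
      (hε : IsSign ε) (hδ : IsSign δ) (hγ : IsSign γ)
      (hadj : Idot (δ • bvec j + γ • bvec m) L.getLast! = 1)
      (horthM : ∀ v ∈ M.dropLast, Idot (δ • bvec j + γ • bvec m) v = 0)
      (horthlast : Idot (δ • bvec j + γ • bvec m) (M.getLast! + ε • bvec m) = 0)
      (horthL : ∀ v ∈ L.dropLast, Idot (δ • bvec j + γ • bvec m) v = 0) :
      CompLegs k h (L ++ [δ • bvec j + γ • bvec m]) (M.dropLast ++ [M.getLast! + ε • bvec m])

/-!
Both quantities are invariant under a final `(-2)`-vector expansion. The expansion uses one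
fresh coordinate `m` and adds one vector; the coordinate `j` of the new vector is already in
use, since the new vector pairs nontrivially with the old final vector of its leg. For `I`, the
bumped vector `v + ε eₘ` has square one less than `v` (as `v m = 0`), contributing `+1`, while
the new `(-2)`-vector contributes `-1`.
-/

open Finset

variable {n : ℕ}

lemma IsSign.ne_zero {ε : ℤ} (hε : IsSign ε) : ε ≠ 0 := by
  rcases hε with rfl | rfl <;> decide

lemma IsSign.mul_self {ε : ℤ} (hε : IsSign ε) : ε * ε = 1 := by
  rcases hε with rfl | rfl <;> rfl

lemma Idot_eq_neg_dotProduct (v w : Vec n) : Idot v w = -(v ⬝ᵥ w) := rfl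

lemma Idot_smul_bvec_add_smul_bvec (a b : ℤ) (p q : Fin n) (v : Vec n) :
    Idot (a • bvec p + b • bvec q) v = -(a * v p + b * v q) := by
  simp only [Idot_eq_neg_dotProduct, add_dotProduct, smul_dotProduct, bvec, single_dotProduct,
    one_mul, smul_eq_mul]

lemma Idot_add_smul_bvec_self {v : Vec n} {m : Fin n} {ε : ℤ} (hε : IsSign ε) (hvm : v m = 0) :
    Idot (v + ε • bvec m) (v + ε • bvec m) = Idot v v - 1 := by
  simp only [Idot_eq_neg_dotProduct, add_dotProduct, dotProduct_add, smul_dotProduct,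
    dotProduct_smul, bvec, single_dotProduct, dotProduct_single, Pi.add_apply, Pi.smul_apply,
    hvm, Pi.single_eq_same, smul_eq_mul]
  linear_combination -hε.mul_self

lemma Idot_smul_bvec_self {p : Fin n} {a : ℤ} (ha : IsSign a) :
    Idot (a • bvec p) (a • bvec p) = -1 := by
  simp only [Idot_eq_neg_dotProduct, smul_dotProduct, dotProduct_smul, bvec, single_dotProduct,
    Pi.single_eq_same, smul_eq_mul, mul_one, ha.mul_self]

lemma Idot_smul_bvec_add_smul_bvec_self {p q : Fin n} {a b : ℤ} (hpq : p ≠ q)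
    (ha : IsSign a) (hb : IsSign b) :
    Idot (a • bvec p + b • bvec q) (a • bvec p + b • bvec q) = -2 := by
  rw [Idot_add_smul_bvec_self hb (by simp [bvec, hpq.symm]), Idot_smul_bvec_self ha]
  norm_num

lemma apply_ne_zero_of_Idot_ne_zero {v : Vec n} {a b : ℤ} {j m : Fin n} (hvm : v m = 0)
    (h : Idot (a • bvec j + b • bvec m) v ≠ 0) : v j ≠ 0 := by
  rw [Idot_smul_bvec_add_smul_bvec, hvm] at h
  rintro hvj
  simp [hvj] at h

lemma List.getLast!_append_singleton {α : Type*} [Inhabited α] (l : List α) (a : α) :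
    (l ++ [a]).getLast! = a := by
  simp

def coordSupport (S : List (Vec n)) : Finset (Fin n) :=
  univ.filter fun j => ∃ v ∈ S, v j ≠ 0

@[simp]
lemma mem_coordSupport {S : List (Vec n)} {j : Fin n} :
    j ∈ coordSupport S ↔ ∃ v ∈ S, v j ≠ 0 := by
  simp [coordSupport]

lemma coordSupport_append (A B : List (Vec n)) :
    coordSupport (A ++ B) = coordSupport A ∪ coordSupport B := by
  ext j
  simp [or_and_right, exists_or]

lemma coordSupport_singleton_add_smul_bvec {v : Vec n} {m : Fin n} {ε : ℤ} (hvm : v m = 0)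
    (hε : ε ≠ 0) : coordSupport [v + ε • bvec m] = insert m (coordSupport [v]) := by
  ext i
  by_cases him : i = m
  · subst him
    simp [bvec, hvm, hε]
  · simp [bvec, him]

lemma coordSupport_singleton_smul_bvec {p : Fin n} {a : ℤ} (ha : a ≠ 0) :
    coordSupport [a • bvec p] = {p} := by
  ext i
  by_cases hip : i = p
  · subst hip
    simp [bvec, ha]
  · simp [bvec, hip]

def IinvList (S : List (Vec n)) : ℤ := (S.map fun v => -Idot v v - 3).sum

@[simp]
lemma IinvList_append (A B : List (Vec n)) : IinvList (A ++ B) = IinvList A + IinvList B := by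
  simp [IinvList]

@[simp]
lemma IinvList_singleton (v : Vec n) : IinvList [v] = -Idot v v - 3 := by
  simp [IinvList]

def LegsInvariant (L M : List (Vec n)) : Prop :=
  (coordSupport (L ++ M)).card = L.length + M.length ∧ IinvList (L ++ M) = -2

lemma LegsInvariant.symm {L M : List (Vec n)} (hLM : LegsInvariant L M) : LegsInvariant M L := by
  obtain ⟨hcard, hI⟩ := hLM
  refine ⟨?_, ?_⟩
  · rw [coordSupport_append, union_comm, ← coordSupport_append, hcard, add_comm]
  · rw [IinvList_append, add_comm, ← IinvList_append, hI]

lemma LegsInvariant.expand {L M : List (Vec n)} {g : Vec n} {m j : Fin n} {ε δ γ : ℤ}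
    (hinv : LegsInvariant (L ++ [g]) M) (hm : ∀ v ∈ L ++ [g] ++ M, v m = 0)
    (hε : IsSign ε) (hδ : IsSign δ) (hγ : IsSign γ) (hj : j ∈ coordSupport M) :
    LegsInvariant (L ++ [g + ε • bvec m]) (M ++ [δ • bvec j + γ • bvec m]) := by
  obtain ⟨hcard, hI⟩ := hinv
  have hgm : g m = 0 := hm g (by simp)
  have hjm : j ≠ m := by
    rintro rfl
    obtain ⟨v, hvM, hvj⟩ := mem_coordSupport.1 hj
    exact hvj (hm v (by simp [hvM]))
  have hmS : m ∉ coordSupport (L ++ [g] ++ M) := by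
    simpa using hm
  have hδjm : (δ • bvec j) m = 0 := by simp [bvec, hjm.symm]
  have hsupport : coordSupport (L ++ [g + ε • bvec m] ++ (M ++ [δ • bvec j + γ • bvec m]))
      = insert m (coordSupport (L ++ [g] ++ M)) := by
    simp only [coordSupport_append, coordSupport_singleton_add_smul_bvec hgm hε.ne_zero,
      coordSupport_singleton_add_smul_bvec hδjm hγ.ne_zero,
      coordSupport_singleton_smul_bvec hδ.ne_zero] at hj ⊢
    ext i
    simp only [mem_union, mem_insert, mem_singleton]
    grind
  refine ⟨?_, ?_⟩
  · rw [hsupport, card_insert_of_notMem hmS, hcard]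
    simp only [List.length_append, List.length_singleton]
    omega
  · simp only [IinvList_append, IinvList_singleton] at hI ⊢
    rw [Idot_add_smul_bvec_self hε hgm, Idot_smul_bvec_add_smul_bvec_self hjm hδ hγ]
    linarith

lemma LegsInvariant.base {k h : Fin n} (hkh : k ≠ h) :
    LegsInvariant [-bvec k + bvec h] [-bvec k - bvec h] := by
  have hplus : -bvec k + bvec h = (-1 : ℤ) • bvec k + (1 : ℤ) • bvec h := by simp
  have hminus : -bvec k - bvec h = (-1 : ℤ) • bvec k + (-1 : ℤ) • bvec h := by
    simp [sub_eq_add_neg]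
  have hhk : (-1 : ℤ) • bvec k h = 0 := by simp [bvec, hkh.symm]
  refine ⟨?_, ?_⟩
  · rw [hplus, hminus, coordSupport_append,
      coordSupport_singleton_add_smul_bvec hhk one_ne_zero,
      coordSupport_singleton_add_smul_bvec hhk (by norm_num),
      coordSupport_singleton_smul_bvec (by norm_num)]
    simp [hkh.symm]
  · rw [hplus, hminus, IinvList_append, IinvList_singleton, IinvList_singleton,
      Idot_smul_bvec_add_smul_bvec_self hkh (.inr rfl) (.inl rfl),
      Idot_smul_bvec_add_smul_bvec_self hkh (.inr rfl) (.inr rfl)]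
    norm_num

namespace CompLegs

variable {k h : Fin n}

lemma ne_nil {L M : List (Vec n)} (hLM : CompLegs k h L M) : L ≠ [] ∧ M ≠ [] := by
  cases hLM <;> simp

lemma legsInvariant {L M : List (Vec n)} (hLM : CompLegs k h L M) : LegsInvariant L M := by
  induction hLM with
  | base hkh => exact .base hkh
  | bumpLeft L M m j ε δ γ hLM hm _ _ hε hδ hγ hadj _ _ _ ih =>
    obtain ⟨hL, hM⟩ := hLM.ne_nil
    obtain ⟨L, g, rfl⟩ := (List.eq_nil_or_concat' L).resolve_left hL
    obtain ⟨M, g', rfl⟩ := (List.eq_nil_or_concat' M).resolve_left hM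
    rw [List.getLast!_append_singleton] at hadj
    have hj : j ∈ coordSupport (M ++ [g']) :=
      mem_coordSupport.2 ⟨g', by simp,
        apply_ne_zero_of_Idot_ne_zero (hm g' (by simp)) (by rw [hadj]; exact one_ne_zero)⟩
    simpa using ih.expand hm hε hδ hγ hj
  | bumpRight L M m j ε δ γ hLM hm _ _ hε hδ hγ hadj _ _ _ ih =>
    obtain ⟨hL, hM⟩ := hLM.ne_nil
    obtain ⟨L, g', rfl⟩ := (List.eq_nil_or_concat' L).resolve_left hL
    obtain ⟨M, g, rfl⟩ := (List.eq_nil_or_concat' M).resolve_left hM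
    rw [List.getLast!_append_singleton] at hadj
    have hj : j ∈ coordSupport (L ++ [g']) :=
      mem_coordSupport.2 ⟨g', by simp,
        apply_ne_zero_of_Idot_ne_zero (hm g' (by simp)) (by rw [hadj]; exact one_ne_zero)⟩
    have hm' : ∀ v ∈ M ++ [g] ++ (L ++ [g']), v m = 0 := fun v hv ↦
      hm v (by simp only [List.mem_append] at hv ⊢; tauto)
    simpa using (ih.symm.expand hm' hε hδ hγ hj).symm

end CompLegs

/-- Complementary legs `L₂, L₃ ⊆ ℤⁿ` satisfy
`|V_{L₂ ∪ L₃}| = n₂ + n₃` and `I(L₂ ∪ L₃) = -2`. -/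
theorem compLegs_support_and_I {n : ℕ} (k h : Fin n) (L M : List (Vec n))
    (hcl : CompLegs k h L M) :
    (Finset.univ.filter fun j : Fin n => ∃ v ∈ L ++ M, v j ≠ 0).card
        = L.length + M.length ∧
    ((L ++ M).map fun v => -Idot v v - 3).sum = -2 :=
  hcl.legsInvariant
end
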